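/- arXiv:2005.03080 — 7 statements merged into one kernel-verified Lean document; each statement's English description precedes it below -/
import Mathlib

section
/- For every γ > 0 and every u ∈ ℝ, one has 2(γ² − u²)/(γ² + u²)² ≥ −1/(4γ²), and equality holds exactly when u² = 3γ². Consequently the second derivative of the Cauchy penalty ψ_γ is bounded below by −1/(4γ²). -/
lemma cauchy_aux_deriv (γ : ℝ) (hγ : 0 < γ) :
    deriv (fun v : ℝ => -Real.log (γ / (γ ^ 2 + v ^ 2))) =
      fun v : ℝ => 2 * v / (γ ^ 2 + v ^ 2) := by
  funext v
  have hpos : ∀ w : ℝ, 0 < γ ^ 2 + w ^ 2 := fun w => by positivity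
  have heq : (fun v : ℝ => -Real.log (γ / (γ ^ 2 + v ^ 2))) =
      fun v : ℝ => Real.log (γ ^ 2 + v ^ 2) - Real.log γ := by
    funext w
    rw [Real.log_div (ne_of_gt hγ) (ne_of_gt (hpos w))]
    ring
  rw [heq]
  have h1 : HasDerivAt (fun w : ℝ => γ ^ 2 + w ^ 2) (2 * v) v := by
    have := (hasDerivAt_pow 2 v).const_add (γ ^ 2)
    simpa using this
  have h2 : HasDerivAt (fun w : ℝ => Real.log (γ ^ 2 + w ^ 2) - Real.log γ)
      (2 * v / (γ ^ 2 + v ^ 2)) v := by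
    simpa using (h1.log (ne_of_gt (hpos v))).sub_const (Real.log γ)
  exact h2.deriv

/-- For every γ > 0 and u ∈ ℝ, 2(γ² − u²)/(γ² + u²)² ≥ −1/(4γ²), with equality
iff u² = 3γ²; consequently the second derivative of the Cauchy penalty ψ_γ is
bounded below by −1/(4γ²). -/
theorem cauchy_penalty_second_deriv_lower_bound (γ : ℝ) (hγ : 0 < γ) (u : ℝ) :
    (-1 / (4 * γ ^ 2) ≤ 2 * (γ ^ 2 - u ^ 2) / (γ ^ 2 + u ^ 2) ^ 2) ∧
    (2 * (γ ^ 2 - u ^ 2) / (γ ^ 2 + u ^ 2) ^ 2 = -1 / (4 * γ ^ 2) ↔ u ^ 2 = 3 * γ ^ 2) ∧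
    (-1 / (4 * γ ^ 2) ≤
      deriv (deriv (fun v : ℝ => -Real.log (γ / (γ ^ 2 + v ^ 2)))) u) := by
  have hs : 0 < γ ^ 2 + u ^ 2 := by positivity
  have hs2 : 0 < (γ ^ 2 + u ^ 2) ^ 2 := by positivity
  have hg2 : 0 < 4 * γ ^ 2 := by positivity
  have hineq : -1 / (4 * γ ^ 2) ≤ 2 * (γ ^ 2 - u ^ 2) / (γ ^ 2 + u ^ 2) ^ 2 := by
    rw [div_le_div_iff₀ hg2 hs2]
    nlinarith [sq_nonneg (u ^ 2 - 3 * γ ^ 2)]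
  refine ⟨hineq, ?_, ?_⟩
  · constructor
    · intro h
      rw [div_eq_div_iff (ne_of_gt hs2) (ne_of_gt hg2)] at h
      have h0 : (u ^ 2 - 3 * γ ^ 2) ^ 2 = 0 := by nlinarith
      have := pow_eq_zero_iff (n := 2) (by norm_num) |>.mp h0
      linarith [this]
    · intro h
      rw [div_eq_div_iff (ne_of_gt hs2) (ne_of_gt hg2)]
      nlinarith
  · rw [cauchy_aux_deriv γ hγ]
    have h1 : HasDerivAt (fun w : ℝ => 2 * w) 2 u := by
      simpa using (hasDerivAt_id u).const_mul 2
    have h2 : HasDerivAt (fun w : ℝ => γ ^ 2 + w ^ 2) (2 * u) u := by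
      simpa using (hasDerivAt_pow 2 u).const_add (γ ^ 2)
    have h3 : HasDerivAt (fun w : ℝ => 2 * w / (γ ^ 2 + w ^ 2))
        ((2 * (γ ^ 2 + u ^ 2) - 2 * u * (2 * u)) / (γ ^ 2 + u ^ 2) ^ 2) u :=
      h1.div h2 (ne_of_gt hs)
    rw [h3.deriv]
    have : (2 * (γ ^ 2 + u ^ 2) - 2 * u * (2 * u)) / (γ ^ 2 + u ^ 2) ^ 2 =
        2 * (γ ^ 2 - u ^ 2) / (γ ^ 2 + u ^ 2) ^ 2 := by ring
    rw [this]
    exact hineq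
end

section
/- Let μ > 0, γ > 0 with γ ≥ √μ/2, and let x ∈ ℝ. Then the proximal cost function g : ℝ → ℝ defined by g(u) = (x − u)²/(2μ) − log(γ/(γ² + u²)) is strictly convex on ℝ. -/
/-!
The derivative of the cost is `(u - x) / μ + φ u`, where `φ u = 2u / (γ² + u²)` is the derivative
of the Cauchy penalty. `φ` is not monotone, but its difference quotients exceed `-1 / (4γ²)`,
because of the identity
`(γ² + a²)(γ² + b²) + 8γ²(γ² - ab) = (ab - 3γ²)² + γ²(a - b)²`.
As `γ ≥ √μ / 2` means `1 / μ ≥ 1 / (4γ²)`, the derivative of the cost is strictly increasing.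
-/

namespace CauchyProx

open Real

theorem hasDerivAt_neg_log_cauchy {γ : ℝ} (hγ : γ ≠ 0) (u : ℝ) :
    HasDerivAt (fun u : ℝ => -log (γ / (γ ^ 2 + u ^ 2))) (2 * u / (γ ^ 2 + u ^ 2)) u := by
  have hlog : (fun u : ℝ => -log (γ / (γ ^ 2 + u ^ 2))) =
      fun u => log (γ ^ 2 + u ^ 2) - log γ := by
    funext u
    rw [log_div hγ (by positivity)]
    ring
  rw [hlog]
  have hden : HasDerivAt (fun u : ℝ => γ ^ 2 + u ^ 2) (2 * u) u := by
    simpa using ((hasDerivAt_id u).pow 2).const_add (γ ^ 2)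
  exact (hden.log (by positivity)).sub_const (log γ)

theorem hasDerivAt_cauchy_prox_cost {γ : ℝ} (hγ : γ ≠ 0) (μ x u : ℝ) :
    HasDerivAt (fun u : ℝ => (x - u) ^ 2 / (2 * μ) - log (γ / (γ ^ 2 + u ^ 2)))
      ((u - x) / μ + 2 * u / (γ ^ 2 + u ^ 2)) u := by
  have hquad : HasDerivAt (fun u : ℝ => (x - u) ^ 2 / (2 * μ)) ((u - x) / μ) u := by
    refine ((((hasDerivAt_id' u).const_sub x).pow 2).div_const (2 * μ)).congr_deriv ?_
    field_simp
    ring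
  exact (hquad.add (hasDerivAt_neg_log_cauchy hγ u)).congr_of_eventuallyEq
    (Filter.Eventually.of_forall fun _ => sub_eq_add_neg _ _)

theorem cauchy_score_sub_lt {γ a b : ℝ} (hγ : γ ≠ 0) (hab : a < b) :
    2 * a / (γ ^ 2 + a ^ 2) - 2 * b / (γ ^ 2 + b ^ 2) < (b - a) / (4 * γ ^ 2) := by
  have hgap : (b - a) / (4 * γ ^ 2) - (2 * a / (γ ^ 2 + a ^ 2) - 2 * b / (γ ^ 2 + b ^ 2)) =
      (b - a) * ((a * b - 3 * γ ^ 2) ^ 2 + γ ^ 2 * (a - b) ^ 2) /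
        (4 * γ ^ 2 * (γ ^ 2 + a ^ 2) * (γ ^ 2 + b ^ 2)) := by
    field_simp
    ring
  have hab' : a - b ≠ 0 := sub_ne_zero.2 hab.ne
  have hpos : 0 < (b - a) * ((a * b - 3 * γ ^ 2) ^ 2 + γ ^ 2 * (a - b) ^ 2) /
      (4 * γ ^ 2 * (γ ^ 2 + a ^ 2) * (γ ^ 2 + b ^ 2)) :=
    div_pos (mul_pos (sub_pos.2 hab) (by positivity)) (by positivity)
  linarith

theorem strictMono_cauchy_prox_deriv {μ γ : ℝ} (x : ℝ) (hμ : 0 < μ) (hμγ : μ ≤ 4 * γ ^ 2) :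
    StrictMono fun u : ℝ => (u - x) / μ + 2 * u / (γ ^ 2 + u ^ 2) := by
  intro a b hab
  have hγ : γ ≠ 0 := by
    rintro rfl
    linarith
  have hslope : (b - a) / (4 * γ ^ 2) ≤ (b - a) / μ :=
    div_le_div_of_nonneg_left (sub_nonneg.2 hab.le) hμ hμγ
  have hlin : (b - x) / μ - (a - x) / μ = (b - a) / μ := by ring
  linarith [cauchy_score_sub_lt hγ hab]

end CauchyProx

theorem cauchy_prox_cost_strictConvex_general (μ γ x : ℝ) (hμ : 0 < μ)
    (hcond : Real.sqrt μ / 2 ≤ γ) :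
    StrictConvexOn ℝ Set.univ
      (fun u : ℝ => (x - u) ^ 2 / (2 * μ) - Real.log (γ / (γ ^ 2 + u ^ 2))) := by
  have hγ : 0 < γ := by linarith [Real.sqrt_pos.2 hμ]
  have hμγ : μ ≤ 4 * γ ^ 2 := by
    have := (Real.sqrt_le_left (by positivity)).1 (show Real.sqrt μ ≤ 2 * γ by linarith)
    linarith
  have hderiv := CauchyProx.hasDerivAt_cauchy_prox_cost hγ.ne' μ x
  refine StrictMono.strictConvexOn_univ_of_deriv
    (continuous_iff_continuousAt.2 fun u => (hderiv u).continuousAt) ?_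
  rw [show deriv _ = _ from funext fun u => (hderiv u).deriv]
  exact CauchyProx.strictMono_cauchy_prox_deriv x hμ hμγ

/-- For μ > 0, γ > 0 with γ ≥ √μ/2 and x ∈ ℝ, the proximal cost function
g(u) = (x − u)²/(2μ) − log(γ/(γ² + u²)) is strictly convex on ℝ. -/
theorem cauchy_prox_cost_strictConvex (μ γ x : ℝ) (hμ : 0 < μ) (hγ : 0 < γ)
    (hcond : Real.sqrt μ / 2 ≤ γ) :
    StrictConvexOn ℝ Set.univ
      (fun u : ℝ => (x - u) ^ 2 / (2 * μ) - Real.log (γ / (γ ^ 2 + u ^ 2))) :=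
  cauchy_prox_cost_strictConvex_general μ γ x hμ hcond
end

section
/- Let μ > 0, γ > 0 with γ ≥ √μ/2, and let x ∈ ℝ. Then the proximal cost function g(u) = (x − u)²/(2μ) − log(γ/(γ² + u²)) attains a global minimum on ℝ at a unique point; i.e., there exists a unique u* ∈ ℝ such that g(u*) ≤ g(u) for all u ∈ ℝ. (In particular the proximal operator of the Cauchy penalty is well defined.) -/
/-!
The cost `g` is coercive, since its logarithmic term grows like `2 log |u|` and the quadratic term
is nonnegative, so by continuity it has a global minimiser. Its derivative
`g'(u) = (u - x)/μ + 2u/(γ² + u²)` is strictly increasing when `μ ≤ 4γ²` (equivalently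
`√μ/2 ≤ γ`): the difference quotient of `g'` has the sign of
`(γ² + a²)(γ² + b²) + 2μ(γ² - ab)`, which is positive. Every minimiser is a critical point,
and an injective derivative has at most one zero.
-/

open Filter

theorem existsUnique_forall_le_of_tendsto_cocompact {f f' : ℝ → ℝ}
    (hf : ∀ u, HasDerivAt f (f' u) u) (hf' : Function.Injective f')
    (hcoer : Tendsto f (cocompact ℝ) atTop) :
    ∃! u : ℝ, ∀ v, f u ≤ f v := by
  have hcont : Continuous f := continuous_iff_continuousAt.2 fun u => (hf u).continuousAt
  have hcrit : ∀ u, (∀ v, f u ≤ f v) → f' u = 0 := fun u hu =>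
    ((isMinOn_univ_iff.2 hu).isLocalMin univ_mem).hasDerivAt_eq_zero (hf u)
  obtain ⟨u, hu⟩ := hcont.exists_forall_le hcoer
  exact ⟨u, hu, fun v hv => hf' ((hcrit v hv).trans (hcrit u hu).symm)⟩

noncomputable def cauchyProxCost (μ γ x u : ℝ) : ℝ :=
  (x - u) ^ 2 / (2 * μ) - Real.log (γ / (γ ^ 2 + u ^ 2))

namespace cauchyProxCost

variable {μ γ : ℝ} (x : ℝ)

theorem eq_add_log_sub_log (hγ : γ ≠ 0) (u : ℝ) :
    cauchyProxCost μ γ x u = (x - u) ^ 2 / (2 * μ) + (Real.log (γ ^ 2 + u ^ 2) - Real.log γ) := by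
  have hD : γ ^ 2 + u ^ 2 ≠ 0 := by positivity
  rw [cauchyProxCost, Real.log_div hγ hD]
  ring

theorem hasDerivAt (hγ : γ ≠ 0) (u : ℝ) :
    HasDerivAt (cauchyProxCost μ γ x) ((u - x) / μ + 2 * u / (γ ^ 2 + u ^ 2)) u := by
  have hD : γ ^ 2 + u ^ 2 ≠ 0 := by positivity
  rw [funext (eq_add_log_sub_log x hγ)]
  have hquad : HasDerivAt (fun u : ℝ => (x - u) ^ 2 / (2 * μ)) ((u - x) / μ) u := by
    refine ((((hasDerivAt_id u).const_sub x).pow 2).div_const (2 * μ)).congr_deriv ?_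
    simp only [id]
    ring
  have hlog : HasDerivAt (fun u : ℝ => Real.log (γ ^ 2 + u ^ 2) - Real.log γ)
      (2 * u / (γ ^ 2 + u ^ 2)) u := by
    refine ((((hasDerivAt_pow 2 u).const_add (γ ^ 2)).log hD).sub_const (Real.log γ)).congr_deriv ?_
    push_cast
    ring
  exact hquad.add hlog

theorem tendsto_cocompact (hμ : 0 ≤ μ) (hγ : γ ≠ 0) :
    Tendsto (cauchyProxCost μ γ x) (cocompact ℝ) atTop := by
  have hsq : Tendsto (fun u : ℝ => γ ^ 2 + u ^ 2) (cocompact ℝ) atTop := by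
    refine tendsto_atTop_add_const_left _ _ ?_
    refine ((tendsto_pow_atTop two_ne_zero).comp (tendsto_norm_cocompact_atTop (E := ℝ))).congr
      fun u => ?_
    simp only [Function.comp_apply, Real.norm_eq_abs, sq_abs]
  refine tendsto_atTop_mono (fun u => ?_)
    (tendsto_atTop_add_const_right _ (-Real.log γ) (Real.tendsto_log_atTop.comp hsq))
  rw [eq_add_log_sub_log x hγ]
  have : 0 ≤ (x - u) ^ 2 / (2 * μ) := by positivity
  simp only [Function.comp_apply]
  linarith

end cauchyProxCost

theorem cauchy_slope_factor_pos {μ γ a b : ℝ} (hμ : 0 < μ) (hμγ : μ ≤ 4 * γ ^ 2) (hab : a ≠ b) :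
    0 < (γ ^ 2 + a ^ 2) * (γ ^ 2 + b ^ 2) + 2 * μ * (γ ^ 2 - a * b) := by
  have hγ : 0 < γ ^ 2 := by linarith
  rcases le_or_gt (a * b) (γ ^ 2) with hle | hgt
  · have : 0 < (γ ^ 2 + a ^ 2) * (γ ^ 2 + b ^ 2) := by positivity
    nlinarith [mul_nonneg hμ.le (sub_nonneg.2 hle)]
  · have hsub : 0 < (a - b) ^ 2 := by positivity [sub_ne_zero.2 hab]
    have hμ_le : 2 * (4 * γ ^ 2) * (γ ^ 2 - a * b) ≤ 2 * μ * (γ ^ 2 - a * b) := by nlinarith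
    -- at `μ = 4γ²` the factor equals `(ab - 3γ²)² + γ²(a - b)²`
    nlinarith [sq_nonneg (a * b - 3 * γ ^ 2), mul_pos hγ hsub]

theorem strictMono_cauchyProxCost_deriv {μ γ : ℝ} (x : ℝ) (hμ : 0 < μ) (hμγ : μ ≤ 4 * γ ^ 2) :
    StrictMono fun u : ℝ => (u - x) / μ + 2 * u / (γ ^ 2 + u ^ 2) := by
  intro a b hab
  have hγ : 0 < γ ^ 2 := by linarith
  have hslope : ((b - x) / μ + 2 * b / (γ ^ 2 + b ^ 2)) - ((a - x) / μ + 2 * a / (γ ^ 2 + a ^ 2))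
      = (b - a) * ((γ ^ 2 + a ^ 2) * (γ ^ 2 + b ^ 2) + 2 * μ * (γ ^ 2 - a * b))
        / (μ * ((γ ^ 2 + a ^ 2) * (γ ^ 2 + b ^ 2))) := by
    field_simp
    ring
  rw [← sub_pos, hslope]
  exact div_pos (mul_pos (sub_pos.2 hab) (cauchy_slope_factor_pos hμ hμγ hab.ne)) (by positivity)

/-- For μ > 0, γ > 0 with γ ≥ √μ/2 and x ∈ ℝ, the proximal cost function
g(u) = (x − u)²/(2μ) − log(γ/(γ² + u²)) attains a global minimum at a unique
point of ℝ. -/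
theorem cauchy_prox_cost_existsUnique_min (μ γ x : ℝ) (hμ : 0 < μ) (hγ : 0 < γ)
    (hcond : Real.sqrt μ / 2 ≤ γ) :
    ∃! uStar : ℝ, ∀ u : ℝ,
      (x - uStar) ^ 2 / (2 * μ) - Real.log (γ / (γ ^ 2 + uStar ^ 2)) ≤
        (x - u) ^ 2 / (2 * μ) - Real.log (γ / (γ ^ 2 + u ^ 2)) := by
  have hμγ : μ ≤ 4 * γ ^ 2 := by
    have := (Real.sqrt_le_left (by positivity)).1 ((div_le_iff₀' two_pos).1 hcond)
    linarith
  exact existsUnique_forall_le_of_tendsto_cocompact (cauchyProxCost.hasDerivAt x hγ.ne')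
    (strictMono_cauchyProxCost_deriv x hμ hμγ).injective
    (cauchyProxCost.tendsto_cocompact x hμ.le hγ.ne')
end

section
/- Let μ > 0, γ > 0 with γ ≥ √μ/2, and let x ∈ ℝ. Then the cubic equation u³ − x·u² + (γ² + 2μ)·u − x·γ² = 0 has exactly one real solution u ∈ ℝ. -/
/-- For μ > 0, γ > 0 with γ ≥ √μ/2 and x ∈ ℝ, the cubic
u³ − x·u² + (γ² + 2μ)·u − x·γ² = 0 has exactly one real solution. -/
theorem cauchy_prox_cubic_existsUnique (μ γ x : ℝ) (hμ : 0 < μ) (hγ : 0 < γ)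
    (hcond : Real.sqrt μ / 2 ≤ γ) :
    ∃! u : ℝ, u ^ 3 - x * u ^ 2 + (γ ^ 2 + 2 * μ) * u - x * γ ^ 2 = 0 := by
  have hg4 : μ ≤ 4 * γ ^ 2 := by
    nlinarith [Real.sq_sqrt hμ.le, Real.sqrt_nonneg μ, hcond]
  -- existence via the intermediate value theorem
  set f : ℝ → ℝ := fun u => u ^ 3 - x * u ^ 2 + (γ ^ 2 + 2 * μ) * u - x * γ ^ 2 with hf
  have hcont : Continuous f := by fun_prop
  set M : ℝ := 1 + |x| + |x| * γ ^ 2 with hM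
  have habs : -|x| ≤ x ∧ x ≤ |x| := ⟨neg_abs_le x, le_abs_self x⟩
  have hxnn : 0 ≤ |x| := abs_nonneg x
  have hMx : |x| + 1 ≤ M := by nlinarith
  have hM1 : 1 ≤ M := by nlinarith
  have hfM : 0 ≤ f M := by
    simp only [hf]
    nlinarith [mul_nonneg hxnn (sq_nonneg γ), sq_nonneg M, mul_pos hγ hγ]
  have hfmM : f (-M) ≤ 0 := by
    simp only [hf]
    nlinarith [mul_nonneg hxnn (sq_nonneg γ), sq_nonneg M, mul_pos hγ hγ]
  have hsub : Set.Icc (f (-M)) (f M) ⊆ f '' Set.Icc (-M) M :=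
    intermediate_value_Icc (by linarith) hcont.continuousOn
  obtain ⟨u, _, hu⟩ := hsub ⟨hfmM, hfM⟩
  refine ⟨u, hu, ?_⟩
  -- uniqueness
  intro v hv
  by_contra hne
  have hvu : v - u ≠ 0 := sub_ne_zero.mpr hne
  have hQ : v ^ 2 + v * u + u ^ 2 - x * (v + u) + (γ ^ 2 + 2 * μ) = 0 := by
    have h : (v - u) * (v ^ 2 + v * u + u ^ 2 - x * (v + u) + (γ ^ 2 + 2 * μ)) = 0 := by
      linear_combination hv - hu
    rcases mul_eq_zero.mp h with h | h
    · exact absurd h hvu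
    · exact h
  have hR : v * u * (v + u) - x * (v * u) + x * γ ^ 2 = 0 := by
    have h : (v - u) * (v * u * (v + u) - x * (v * u) + x * γ ^ 2) = 0 := by
      linear_combination u * hv - v * hu
    rcases mul_eq_zero.mp h with h | h
    · exact absurd h hvu
    · exact h
  have key : γ ^ 2 * ((v + u) ^ 2 - 4 * (v * u)) =
      -((v * u + γ ^ 2 - μ) ^ 2) - μ * (4 * γ ^ 2 - μ) := by
    linear_combination (γ ^ 2 - v * u) * hQ + (v + u) * hR
  have hsq : 0 < (v - u) ^ 2 := by positivity
  nlinarith [sq_nonneg (v * u + γ ^ 2 - μ), mul_pos (mul_pos hγ hγ) hsq]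
end

section
/- Let μ > 0, γ > 0 with γ ≥ √μ/2, and let x ∈ ℝ. With p = γ² + 2μ − x²/3 and q = x·γ² + 2x³/27 − (x/3)(γ² + 2μ), the discriminant quantity satisfies p³/27 + q²/4 ≥ 0. -/
/-- For μ > 0, γ > 0 with γ ≥ √μ/2 and x ∈ ℝ, with
p = γ² + 2μ − x²/3 and q = x·γ² + 2x³/27 − (x/3)(γ² + 2μ), the Cardano
discriminant quantity satisfies p³/27 + q²/4 ≥ 0. -/
theorem cauchy_prox_cardano_discriminant_nonneg (μ γ x : ℝ) (hμ : 0 < μ) (hγ : 0 < γ)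
    (hcond : Real.sqrt μ / 2 ≤ γ) (p q : ℝ)
    (hp : p = γ ^ 2 + 2 * μ - x ^ 2 / 3)
    (hq : q = x * γ ^ 2 + 2 * x ^ 3 / 27 - (x / 3) * (γ ^ 2 + 2 * μ)) :
    0 ≤ p ^ 3 / 27 + q ^ 2 / 4 := by
  have hμ4 : μ ≤ 4 * γ ^ 2 := by
    nlinarith [Real.sq_sqrt hμ.le, Real.sqrt_nonneg μ]
  have hcube : 0 ≤ 2 * μ * (8 * γ ^ 2 - 2 * μ) ^ 3 := by
    have h0 : 0 ≤ 8 * γ ^ 2 - 2 * μ := by linarith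
    exact mul_nonneg (by linarith) (pow_nonneg h0 3)
  have hsq := sq_nonneg (8 * γ ^ 2 * x ^ 2 + 8 * γ ^ 4 - 40 * γ ^ 2 * μ - 4 * μ ^ 2)
  have hγ2 : 0 < γ ^ 2 := by positivity
  have key : 1728 * γ ^ 2 * (p ^ 3 / 27 + q ^ 2 / 4) =
      (8 * γ ^ 2 * x ^ 2 + 8 * γ ^ 4 - 40 * γ ^ 2 * μ - 4 * μ ^ 2) ^ 2 +
        2 * μ * (8 * γ ^ 2 - 2 * μ) ^ 3 := by
    subst hp hq; ring
  nlinarith [key, hsq, hcube, hγ2]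
end

section
/- Let μ > 0, γ > 0 with γ > √μ/2, and let x ∈ ℝ. Then the second derivative of the proximal cost function g(u) = (x − u)²/(2μ) − log(γ/(γ² + u²)), namely g″(u) = 1/μ + 2(γ² − u²)/(γ² + u²)², is strictly positive for every u ∈ ℝ. -/
/-!
Differentiating twice gives `g″(u) = 1/μ + 2(γ² − u²)/(γ² + u²)²`. The second summand has
minimum `−1/(4γ²)`, attained at `u² = 3γ²`, because
`(γ² + t)² + 8γ²(γ² − t) = (t − 3γ²)²`; and `√μ/2 < γ` says exactly that `1/(4γ²) < 1/μ`.
-/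

open Real

lemma hasDerivAt_log_div_add_sq {a c : ℝ} (ha : a ≠ 0) (hc : 0 < c) (u : ℝ) :
    HasDerivAt (fun v : ℝ => log (a / (c + v ^ 2))) (-(2 * u / (c + u ^ 2))) u := by
  have hpos : ∀ v : ℝ, 0 < c + v ^ 2 := fun v => by positivity
  have hlog : (fun v : ℝ => log (a / (c + v ^ 2))) = fun v => log a - log (c + v ^ 2) :=
    funext fun v => log_div ha (hpos v).ne'
  rw [hlog]
  simpa using ((hasDerivAt_pow 2 u).const_add c).log (hpos u).ne' |>.const_sub (log a)

lemma hasDerivAt_two_mul_div_add_sq {c : ℝ} (hc : 0 < c) (u : ℝ) :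
    HasDerivAt (fun v : ℝ => 2 * v / (c + v ^ 2)) (2 * (c - u ^ 2) / (c + u ^ 2) ^ 2) u := by
  have hden : HasDerivAt (fun v : ℝ => c + v ^ 2) (2 * u) u := by
    simpa using (hasDerivAt_pow 2 u).const_add c
  refine (((hasDerivAt_id' u).const_mul 2).fun_div hden (by positivity)).congr_deriv ?_
  ring

lemma neg_one_div_four_mul_le_two_mul_div_add_sq {c : ℝ} (hc : 0 < c) (u : ℝ) :
    -(1 / (4 * c)) ≤ 2 * (c - u ^ 2) / (c + u ^ 2) ^ 2 := by
  have hD : 0 < c + u ^ 2 := by positivity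
  rw [← sub_nonneg]
  calc (0 : ℝ) ≤ (u ^ 2 - 3 * c) ^ 2 / (4 * c * (c + u ^ 2) ^ 2) := by positivity
    _ = 2 * (c - u ^ 2) / (c + u ^ 2) ^ 2 - -(1 / (4 * c)) := by
      field_simp
      ring

lemma hasDerivAt_cauchy_prox_cost (μ x : ℝ) {γ : ℝ} (hγ : γ ≠ 0) (u : ℝ) :
    HasDerivAt (fun v : ℝ => (x - v) ^ 2 / (2 * μ) - log (γ / (γ ^ 2 + v ^ 2)))
      ((u - x) / μ + 2 * u / (γ ^ 2 + u ^ 2)) u := by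
  have hquad : HasDerivAt (fun v : ℝ => (x - v) ^ 2 / (2 * μ)) ((u - x) / μ) u := by
    refine ((((hasDerivAt_id' u).const_sub x).pow 2).div_const (2 * μ)).congr_deriv ?_
    push_cast
    ring
  refine (hquad.fun_sub (hasDerivAt_log_div_add_sq hγ (by positivity) u)).congr_deriv ?_
  ring

lemma hasDerivAt_deriv_cauchy_prox_cost (μ x : ℝ) {γ : ℝ} (hγ : γ ≠ 0) (u : ℝ) :
    HasDerivAt (fun v : ℝ => (v - x) / μ + 2 * v / (γ ^ 2 + v ^ 2))
      (1 / μ + 2 * (γ ^ 2 - u ^ 2) / (γ ^ 2 + u ^ 2) ^ 2) u := by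
  have hlin : HasDerivAt (fun v : ℝ => (v - x) / μ) (1 / μ) u := by
    simpa using ((hasDerivAt_id u).sub_const x).div_const μ
  exact hlin.add (hasDerivAt_two_mul_div_add_sq (by positivity) u)

/-- For μ > 0, γ > 0 with γ > √μ/2 and x ∈ ℝ, the second derivative of the
proximal cost g(u) = (x − u)²/(2μ) − log(γ/(γ² + u²)), namely
g″(u) = 1/μ + 2(γ² − u²)/(γ² + u²)², is strictly positive for all u. -/
theorem cauchy_prox_cost_second_deriv_pos (μ γ x : ℝ) (hμ : 0 < μ) (hγ : 0 < γ)
    (hcond : Real.sqrt μ / 2 < γ) :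
    ∀ u : ℝ,
      deriv (deriv (fun v : ℝ =>
          (x - v) ^ 2 / (2 * μ) - Real.log (γ / (γ ^ 2 + v ^ 2)))) u
        = 1 / μ + 2 * (γ ^ 2 - u ^ 2) / (γ ^ 2 + u ^ 2) ^ 2 ∧
      0 < deriv (deriv (fun v : ℝ =>
          (x - v) ^ 2 / (2 * μ) - Real.log (γ / (γ ^ 2 + v ^ 2)))) u := by
  intro u
  have hderiv : deriv (fun v : ℝ => (x - v) ^ 2 / (2 * μ) - log (γ / (γ ^ 2 + v ^ 2)))
      = fun v => (v - x) / μ + 2 * v / (γ ^ 2 + v ^ 2) :=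
    funext fun v => (hasDerivAt_cauchy_prox_cost μ x hγ.ne' v).deriv
  rw [hderiv, (hasDerivAt_deriv_cauchy_prox_cost μ x hγ.ne' u).deriv]
  refine ⟨rfl, ?_⟩
  have hμγ : μ < 4 * γ ^ 2 := by
    have hsq := (sqrt_lt' (by positivity)).1 (show √μ < 2 * γ by linarith)
    linarith
  have hbound := neg_one_div_four_mul_le_two_mul_div_add_sq (pow_pos hγ 2) u
  linarith [one_div_lt_one_div_of_lt hμ hμγ]
end

section
/- Let μ > 0, γ > 0 with γ ≥ √μ/2, and let x, u* ∈ ℝ. Then u* is a global minimizer of the proximal cost function g(u) = (x − u)²/(2μ) − log(γ/(γ² + u²)) if and only if u* satisfies the cubic equation u*³ − x·u*² + (γ² + 2μ)·u* − x·γ² = 0. -/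
/-!
The derivative `2u / (γ² + u²)` of the Cauchy penalty never decreases faster than with
slope `-1 / (4γ²)`, so for `μ ≤ 4γ²` (equivalently `√μ / 2 ≤ γ`) the derivative
`(u - x) / μ + 2u / (γ² + u²)` of the proximal cost is monotone and the cost is convex.
For a differentiable convex function on `ℝ` the global minimizers are exactly the stationary
points, and clearing the denominator `μ (γ² + u²)` turns stationarity into the cubic equation.
-/

open Set

theorem isMinOn_univ_iff_of_hasDerivAt_of_monotone {f f' : ℝ → ℝ}
    (hf : ∀ u, HasDerivAt f (f' u) u) (hf' : Monotone f') (a : ℝ) :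
    IsMinOn f univ a ↔ f' a = 0 := by
  refine ⟨fun hmin => (hmin.isLocalMin Filter.univ_mem).hasDerivAt_eq_zero (hf a), fun ha => ?_⟩
  have hderiv : deriv f = f' := funext fun u => (hf u).deriv
  have hconvex : ConvexOn ℝ univ f :=
    MonotoneOn.convexOn_of_deriv convex_univ
      (fun u _ => (hf u).continuousAt.continuousWithinAt)
      (fun u _ => (hf u).differentiableAt.differentiableWithinAt)
      (hderiv ▸ hf'.monotoneOn _)
  refine hconvex.isMinOn_of_rightDeriv_eq_zero (by simp) ?_
  rw [(hf a).hasDerivWithinAt.derivWithin (uniqueDiffWithinAt_Ioi a), ha]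

namespace CauchyProx

noncomputable def penalty (γ u : ℝ) : ℝ := -Real.log (γ / (γ ^ 2 + u ^ 2))

noncomputable def cost (μ γ x u : ℝ) : ℝ := (x - u) ^ 2 / (2 * μ) + penalty γ u

variable {μ γ : ℝ}

theorem hasDerivAt_penalty (hγ : γ ≠ 0) (u : ℝ) :
    HasDerivAt (penalty γ) (2 * u / (γ ^ 2 + u ^ 2)) u := by
  have hA : γ ^ 2 + u ^ 2 ≠ 0 := by positivity
  have hdenom : HasDerivAt (fun v => γ ^ 2 + v ^ 2) (2 * u) u := by
    simpa using (hasDerivAt_pow 2 u).const_add (γ ^ 2)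
  have hratio :
      HasDerivAt (fun v => γ / (γ ^ 2 + v ^ 2)) (-(γ * (2 * u)) / (γ ^ 2 + u ^ 2) ^ 2) u := by
    simpa using (hasDerivAt_const u γ).fun_div hdenom hA
  refine (hratio.log (div_ne_zero hγ hA)).neg.congr_deriv ?_
  field_simp

theorem monotone_penalty_deriv_add (hγ : γ ≠ 0) :
    Monotone fun u => 2 * u / (γ ^ 2 + u ^ 2) + u / (4 * γ ^ 2) := by
  intro a b hab
  -- `(γ² + a²)(γ² + b²) + 8γ²(γ² - ab) = γ²(a - b)² + (ab - 3γ²)²`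
  have hdiff : (2 * b / (γ ^ 2 + b ^ 2) + b / (4 * γ ^ 2)) -
      (2 * a / (γ ^ 2 + a ^ 2) + a / (4 * γ ^ 2)) =
      (b - a) * (γ ^ 2 * (a - b) ^ 2 + (a * b - 3 * γ ^ 2) ^ 2) /
        (4 * γ ^ 2 * (γ ^ 2 + a ^ 2) * (γ ^ 2 + b ^ 2)) := by
    field_simp
    ring
  refine sub_nonneg.1 (hdiff ▸ div_nonneg (mul_nonneg (sub_nonneg.2 hab) ?_) ?_) <;> positivity

theorem hasDerivAt_cost (hγ : γ ≠ 0) (x u : ℝ) :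
    HasDerivAt (cost μ γ x) ((u - x) / μ + 2 * u / (γ ^ 2 + u ^ 2)) u := by
  have hquad : HasDerivAt (fun v => (x - v) ^ 2 / (2 * μ)) ((u - x) / μ) u := by
    refine ((((hasDerivAt_id u).const_sub x).pow 2).div_const (2 * μ)).congr_deriv ?_
    simp
    ring
  exact hquad.add (hasDerivAt_penalty hγ u)

theorem monotone_cost_deriv (hμ : 0 < μ) (hγ : γ ≠ 0) (hμγ : μ ≤ 4 * γ ^ 2) (x : ℝ) :
    Monotone fun u => (u - x) / μ + 2 * u / (γ ^ 2 + u ^ 2) := by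
  intro a b hab
  have hpenalty := monotone_penalty_deriv_add hγ hab
  have hslope : (b - a) / (4 * γ ^ 2) ≤ (b - a) / μ :=
    div_le_div_of_nonneg_left (sub_nonneg.2 hab) hμ hμγ
  simp only [sub_div] at hpenalty hslope ⊢
  linarith

theorem cost_deriv_eq (hμ : μ ≠ 0) (hγ : γ ≠ 0) (x u : ℝ) :
    (u - x) / μ + 2 * u / (γ ^ 2 + u ^ 2) =
      (u ^ 3 - x * u ^ 2 + (γ ^ 2 + 2 * μ) * u - x * γ ^ 2) / (μ * (γ ^ 2 + u ^ 2)) := by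
  field_simp
  ring

end CauchyProx

open CauchyProx in
/-- For μ > 0, γ > 0 with γ ≥ √μ/2 and x, u* ∈ ℝ, u* minimizes the proximal
cost g(u) = (x − u)²/(2μ) − log(γ/(γ² + u²)) globally iff u* satisfies the
cubic u*³ − x·u*² + (γ² + 2μ)·u* − x·γ² = 0. -/
theorem cauchy_prox_min_iff_cubic (μ γ x uStar : ℝ) (hμ : 0 < μ) (hγ : 0 < γ)
    (hcond : Real.sqrt μ / 2 ≤ γ) :
    (∀ u : ℝ,
      (x - uStar) ^ 2 / (2 * μ) - Real.log (γ / (γ ^ 2 + uStar ^ 2)) ≤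
        (x - u) ^ 2 / (2 * μ) - Real.log (γ / (γ ^ 2 + u ^ 2))) ↔
    uStar ^ 3 - x * uStar ^ 2 + (γ ^ 2 + 2 * μ) * uStar - x * γ ^ 2 = 0 := by
  have hμγ : μ ≤ 4 * γ ^ 2 := by
    have := (Real.sqrt_le_left (by positivity)).1 (show Real.sqrt μ ≤ 2 * γ by linarith)
    linarith
  have hmin := isMinOn_univ_iff_of_hasDerivAt_of_monotone (hasDerivAt_cost hγ.ne' x)
    (monotone_cost_deriv hμ hγ.ne' hμγ x) uStar
  rw [isMinOn_univ_iff, cost_deriv_eq hμ.ne' hγ.ne', div_eq_zero_iff,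
    or_iff_left (by positivity)] at hmin
  simpa only [cost, penalty, ← sub_eq_add_neg] using hmin
end
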